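/- Let u, v be distinct vertices with v ∈ loop(u) and d(x) > u for all descendants x of u in T. Let G' be formed from G by the operation transform(u, v): first, for each arc from v to a proper descendant w ∉ {v, p(v)} of u in T, add an arc (p(u), w); then contract v into p(v). Then for all vertices x, w ≠ v, x dominates w in G' if and only if x dominates w in G. -/

import Mathlib

universe u

variable {V : Type u}

attribute [local instance] Classical.propDecidable

/-- A flow graph: a directed graph with arc relation `A` and start vertex `s`. -/
structure FlowGraph (V : Type u) where
  A : V → V → Prop
  s : V

namespace FlowGraph

/-- `p` is a (directed) path from `a` to `b`: a nonempty list of vertices starting at `a`,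
ending at `b`, with consecutive vertices joined by arcs. -/
def IsPath (G : FlowGraph V) (p : List V) (a b : V) : Prop :=
  p ≠ [] ∧ p.head? = some a ∧ p.getLast? = some b ∧ p.Chain' G.A

def Reach (G : FlowGraph V) (a b : V) : Prop := ∃ p, G.IsPath p a b

/-- `u` dominates `v`: every path from the start vertex `s` to `v` contains `u`. -/
def Dom (G : FlowGraph V) (u v : V) : Prop :=
  ∀ p, G.IsPath p G.s v → u ∈ p

/-- Acyclic: no cycle of more than one vertex, i.e. no two distinct mutually reachable
vertices. -/
def Acyclic (G : FlowGraph V) : Prop :=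
  ∀ a b, a ≠ b → ¬ (G.Reach a b ∧ G.Reach b a)

/-- A spanning tree of `G` rooted at `s`, given by a parent function: every non-root
vertex has a tree arc from its parent, and the parent chain of every vertex reaches `s`. -/
structure SpanningTree (G : FlowGraph V) where
  parent : V → V
  parent_arc : ∀ v, v ≠ G.s → G.A (parent v) v
  parent_root : parent G.s = G.s
  root_reach : ∀ v, Relation.ReflTransGen (fun a b => parent a = b) v G.s

/-- `u` is an ancestor of `v` in the tree `T` (reflexively). -/
def Anc {G : FlowGraph V} (T : SpanningTree G) (u v : V) : Prop :=
  Relation.ReflTransGen (fun a b => T.parent a = b) v u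

/-- Replace occurrences of `v` by `x`. -/
noncomputable def repl (v x a : V) : V := if a = v then x else a

/-- Contraction of vertex `v` into vertex `x`: every arc end equal to `v` is replaced by `x`. -/
noncomputable def contract (G : FlowGraph V) (v x : V) : FlowGraph V where
  A a b := ∃ a' b', G.A a' b' ∧ a = repl v x a' ∧ b = repl v x b'
  s := G.s

/-- `x ∈ loop(u)`: `x` is a descendant of `u` in `T` with a path from `x` to `u` in `G`
containing only descendants of `u` in `T`. -/
def InLoop (G : FlowGraph V) (T : SpanningTree G) (u x : V) : Prop :=
  Anc T u x ∧ ∃ p, G.IsPath p x u ∧ ∀ y ∈ p, Anc T u y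

/-- `d` is an immediate-dominator function for `G`: for each `v ≠ s`, `d v ≠ v` is a
dominator of `v` and every dominator of `v` other than `v` itself dominates `d v`. -/
def IsIdom (G : FlowGraph V) (d : V → V) : Prop :=
  ∀ v, v ≠ G.s → d v ≠ v ∧ G.Dom (d v) v ∧
    ∀ u, G.Dom u v → u ≠ v → G.Dom u (d v)

end FlowGraph

open FlowGraph

/-- `transform(u, v)`: first, for each arc from `v` to a proper descendant
`w ∉ {v, p v}` of `u` in `T`, add an arc `(p u, w)`; then contract `v` into `p v`. -/
noncomputable def transform (G : FlowGraph V) (T : SpanningTree G) (u v : V) : FlowGraph V :=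
  FlowGraph.contract
    ⟨fun a b => G.A a b ∨
      (a = T.parent u ∧ G.A v b ∧ Anc T u b ∧ b ≠ u ∧ b ≠ v ∧ b ≠ T.parent v), G.s⟩
    v (T.parent v)

/-!
Dominance is non-reachability: `x` dominates `w` iff `w` cannot be reached from `s` while
avoiding `x`. Walks of `G` avoiding `x` are mapped to walks of `transform(u, v)` by the
contraction, which only fails for `x = p v`, where a walk through `v` would be sent through
`p v`. Such a walk is rerouted at the arc `(v, c)` by which it last leaves `v`: along the tree
path to `c`, or, when `c` is a proper descendant of `u`, along the tree path to `p u` and the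
added arc `(p u, c)`. Conversely, every arc of `transform(u, v)` lifts to a walk of `G` whose
extra vertices lie in the subtree of `u`, so dominance can only be lost at a dominator `x` of
`w` descending from `u`; but `d w > u` forces such an `x` to be `w` itself.
-/

namespace FlowGraph

variable {G : FlowGraph V}

def ArcInto (G : FlowGraph V) (S : Set V) (a b : V) : Prop := G.A a b ∧ b ∈ S

theorem isPath_singleton (a : V) : G.IsPath [a] a a :=
  ⟨List.cons_ne_nil _ _, rfl, rfl, List.isChain_singleton a⟩

theorem IsPath.cons {p : List V} {a b c : V} (hp : G.IsPath p b c) (hab : G.A a b) :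
    G.IsPath (a :: p) a c := by
  obtain ⟨hne, hh, hl, hc⟩ := hp
  obtain ⟨b', t, rfl⟩ := List.exists_cons_of_ne_nil hne
  obtain rfl : b' = b := by simpa using hh
  exact ⟨List.cons_ne_nil _ _, rfl, by rwa [List.getLast?_cons_cons], hc.cons_cons hab⟩

theorem exists_isPath_subset_iff {S : Set V} {a b : V} :
    (∃ p, G.IsPath p a b ∧ ∀ z ∈ p, z ∈ S) ↔
      a ∈ S ∧ Relation.ReflTransGen (G.ArcInto S) a b := by
  constructor
  · rintro ⟨p, hp, hS⟩
    induction p generalizing a with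
    | nil => exact absurd rfl hp.1
    | cons a' t ih =>
      obtain ⟨-, hh, hl, hc⟩ := hp
      obtain rfl : a = a' := by simpa using hh.symm
      refine ⟨hS a List.mem_cons_self, ?_⟩
      cases t with
      | nil =>
        obtain rfl : a = b := by simpa using hl
        exact .refl
      | cons c t =>
        have hpc : G.IsPath (c :: t) c b :=
          ⟨List.cons_ne_nil _ _, rfl, by rwa [List.getLast?_cons_cons] at hl, hc.tail⟩
        have hc' := ih hpc (fun z hz => hS z (List.mem_cons_of_mem _ hz))
        exact .head ⟨(List.isChain_cons_cons.1 hc).1, hc'.1⟩ hc'.2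
  · rintro ⟨ha, hab⟩
    induction hab using Relation.ReflTransGen.head_induction_on with
    | refl => exact ⟨[b], isPath_singleton b, by simpa using ha⟩
    | @head a c hac _ ih =>
      obtain ⟨p, hp, hS⟩ := ih hac.2
      exact ⟨_, hp.cons hac.1, by simpa [ha] using hS⟩

theorem dom_iff_not_reach {x w : V} :
    G.Dom x w ↔ ¬ (G.s ≠ x ∧ Relation.ReflTransGen (G.ArcInto {x}ᶜ) G.s w) := by
  rw [← Set.mem_compl_singleton_iff, ← exists_isPath_subset_iff]
  simp [Dom]

theorem dom_self (w : V) : G.Dom w w := fun _ hp => List.mem_of_getLast? hp.2.2.1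

theorem ArcInto.reflTransGen_mono {S S' : Set V} (hSS' : S ⊆ S') {a b : V}
    (h : Relation.ReflTransGen (G.ArcInto S) a b) :
    Relation.ReflTransGen (G.ArcInto S') a b :=
  Relation.ReflTransGen.mono (fun _ _ hxy => ⟨hxy.1, hSS' hxy.2⟩) _ _ h

section Tree

variable {T : SpanningTree G} {a b c : V}

theorem Anc.trans (hab : Anc T a b) (hbc : Anc T b c) : Anc T a c :=
  Relation.ReflTransGen.trans hbc hab

theorem anc_root (a : V) : Anc T G.s a := T.root_reach a

theorem Anc.parent (h : Anc T a b) (hne : b ≠ a) : Anc T a (T.parent b) := by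
  rcases h.cases_head with h | ⟨c, rfl, hc⟩
  · exact absurd h hne
  · exact hc

theorem Anc.le [LinearOrder V] (hbu : ∀ x, x ≠ G.s → x < T.parent x) (h : Anc T a b) :
    b ≤ a := by
  induction h with
  | refl => exact le_rfl
  | @tail c e _ hce ih =>
    by_cases hcs : c = G.s
    · subst hcs
      rwa [← hce, T.parent_root]
    · exact ih.trans (hce ▸ hbu c hcs).le

theorem Anc.ne_root [LinearOrder V] (hbu : ∀ x, x ≠ G.s → x < T.parent x)
    (h : Anc T a b) (hne : a ≠ b) : b ≠ G.s := by
  rintro rfl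
  exact hne (le_antisymm ((anc_root a).le hbu) (h.le hbu))

theorem reflTransGen_of_anc {S : Set V} (h : Anc T a b)
    (hS : ∀ z, Anc T a z → Anc T z b → z ∈ S) :
    Relation.ReflTransGen (G.ArcInto S) a b := by
  induction h using Relation.ReflTransGen.head_induction_on with
  | refl => exact .refl
  | @head b c hbc hca ih =>
    have hab : Anc T a b := .head hbc hca
    have hc := ih fun z hz hzc => hS z hz (.head hbc hzc)
    by_cases hbs : b = G.s
    · subst hbs
      rwa [← hbc, T.parent_root] at hc
    · exact hc.tail ⟨hbc ▸ T.parent_arc b hbs, hS b hab .refl⟩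

theorem Dom.anc (T : SpanningTree G) {x w : V} (h : G.Dom x w) : Anc T x w := by
  by_contra hx
  refine dom_iff_not_reach.1 h ⟨fun hs => hx (hs ▸ anc_root w), ?_⟩
  exact reflTransGen_of_anc (anc_root w) fun z _ hzw hzx => hx (hzx ▸ hzw)

/-- A dominator `x ≠ w` of `w` is a proper tree ancestor of `w` and dominates `d w`, hence is
an ancestor of `d w`; so `d w ≤ x`, which is impossible below `u` when `d w > u`. -/
theorem eq_of_dom_of_anc [LinearOrder V] (hbu : ∀ x, x ≠ G.s → x < T.parent x)
    {d : V → V} (hd : G.IsIdom d) {u : V} (hdesc : ∀ x, Anc T u x → x ≠ G.s → u < d x)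
    {x w : V} (hxw : G.Dom x w) (hux : Anc T u x) : x = w := by
  by_contra hne
  have hxw' : Anc T x w := hxw.anc T
  have hws : w ≠ G.s := by
    rintro rfl
    exact hne (le_antisymm ((anc_root x).le hbu) (hxw'.le hbu))
  have hudw : u < d w := hdesc w (hux.trans hxw') hws
  have hdwx : d w ≤ x := (((hd w hws).2.2 x hxw hne).anc T).le hbu
  exact (hudw.trans_le (hdwx.trans (hux.le hbu))).false

end Tree

theorem repl_of_ne {v x a : V} (h : a ≠ v) : repl v x a = a := if_neg h

theorem repl_self (v x : V) : repl v x v = x := if_pos rfl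

end FlowGraph

open Relation

section Transform

variable {G : FlowGraph V} {T : SpanningTree G} {u v : V}

theorem transform_arc_of_arc {a b : V} (h : G.A a b) :
    (transform G T u v).A (repl v (T.parent v) a) (repl v (T.parent v) b) :=
  ⟨a, b, Or.inl h, rfl, rfl⟩

theorem transform_arc_parent {c : V} (hpu : T.parent u ≠ v) (hvc : G.A v c) (huc : Anc T u c)
    (hcu : c ≠ u) (hcv : c ≠ v) (hcpv : c ≠ T.parent v) :
    (transform G T u v).A (T.parent u) c := by
  have h : (transform G T u v).A (repl v (T.parent v) (T.parent u)) (repl v (T.parent v) c) :=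
    ⟨T.parent u, c, Or.inr ⟨rfl, hvc, huc, hcu, hcv, hcpv⟩, rfl, rfl⟩
  rwa [repl_of_ne hpu, repl_of_ne hcv] at h

theorem transform_reflTransGen_repl {S S' : Set V}
    (hSS' : ∀ y ∈ S, repl v (T.parent v) y ∈ S')
    {a b : V} (h : ReflTransGen (G.ArcInto S) a b) :
    ReflTransGen ((transform G T u v).ArcInto S') (repl v (T.parent v) a)
      (repl v (T.parent v) b) :=
  ReflTransGen.lift _ (fun _ y hxy => ⟨transform_arc_of_arc hxy.1, hSS' y hxy.2⟩) _ _ h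

/-- The vertices `v` and `p v` merged by the contraction reach each other inside the subtree
of `u`: through the tree arc `(p v, v)` one way, through `loop(u)` the other way. -/
theorem reflTransGen_repl_left (huv : Anc T u v) (m : V) :
    ReflTransGen (G.ArcInto {z | Anc T u z}) (repl v (T.parent v) m) m := by
  by_cases hm : m = v
  · subst hm
    by_cases hms : m = G.s
    · rw [repl_self, hms, T.parent_root]
    · exact .single ⟨by simpa only [repl_self] using T.parent_arc m hms, huv⟩
  · rw [repl_of_ne hm]

theorem reflTransGen_repl_right
    (hD : ReflTransGen (G.ArcInto {z | Anc T u z}) v (T.parent v)) (m : V) :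
    ReflTransGen (G.ArcInto {z | Anc T u z}) m (repl v (T.parent v) m) := by
  by_cases hm : m = v
  · subst hm
    rwa [repl_self]
  · rw [repl_of_ne hm]

theorem transform_arc_lift (hus : u ≠ G.s) (huv : Anc T u v)
    (hD : ReflTransGen (G.ArcInto {z | Anc T u z}) v (T.parent v)) {a b : V}
    (h : (transform G T u v).A a b) :
    ReflTransGen (G.ArcInto {z | z = b ∨ Anc T u z}) a b := by
  have hsub : {z | Anc T u z} ⊆ {z | z = b ∨ Anc T u z} := fun _ => Or.inr
  obtain ⟨a', b', hab', rfl, rfl⟩ := h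
  rcases hab' with hG | ⟨rfl, -, huc, -, hcv, -⟩
  · refine ((ArcInto.reflTransGen_mono hsub (reflTransGen_repl_left huv a')).tail
      ⟨hG, ?_⟩).trans (ArcInto.reflTransGen_mono hsub (reflTransGen_repl_right hD b'))
    by_cases hb' : b' = v
    · exact Or.inr (hb' ▸ huv)
    · exact Or.inl (repl_of_ne hb').symm
  · rw [repl_of_ne hcv] at hsub ⊢
    refine ArcInto.reflTransGen_mono hsub
      (((reflTransGen_repl_left huv (T.parent u)).tail ⟨T.parent_arc u hus, .refl⟩).trans ?_)
    exact reflTransGen_of_anc huc fun z huz _ => huz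

theorem transform_dom_of_dom [LinearOrder V] (hbu : ∀ x, x ≠ G.s → x < T.parent x)
    {d : V → V} (hd : G.IsIdom d) (hdesc : ∀ x, Anc T u x → x ≠ G.s → u < d x)
    (hus : u ≠ G.s) (huv : Anc T u v)
    (hD : ReflTransGen (G.ArcInto {z | Anc T u z}) v (T.parent v)) {x w : V}
    (h : G.Dom x w) : (transform G T u v).Dom x w := by
  by_cases hux : Anc T u x
  · rw [eq_of_dom_of_anc hbu hd hdesc h hux]
    exact dom_self w
  rw [dom_iff_not_reach] at h ⊢
  rintro ⟨hsx, hsw⟩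
  refine h ⟨hsx, reflTransGen_closed (fun a b hab => ?_) _ _ hsw⟩
  refine ArcInto.reflTransGen_mono (fun z hz => ?_) (transform_arc_lift hus huv hD hab.1)
  rcases hz with rfl | huz
  · exact hab.2
  · exact fun hzx => hux (hzx ▸ huz)

/-- From `v`, an arc into a vertex `c ∉ {v, p v}` is replaced by a walk of `transform(u, v)`
avoiding `p v`: the tree path to `c`, or, if `c` is a proper descendant of `u`, the tree path
to `p u` followed by the added arc `(p u, c)`. -/
theorem transform_reach_of_arc_from [LinearOrder V] (hbu : ∀ x, x ≠ G.s → x < T.parent x)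
    (hus : u ≠ G.s) (huv : Anc T u v) (hne : u ≠ v) {c : V} (hvc : G.A v c) (hcv : c ≠ v)
    (hcpv : c ≠ T.parent v) :
    ReflTransGen ((transform G T u v).ArcInto {T.parent v}ᶜ) G.s c := by
  have hupv : Anc T u (T.parent v) := huv.parent hne.symm
  have tree : ∀ y, (∀ z, Anc T z y → z ≠ v ∧ z ≠ T.parent v) →
      ReflTransGen ((transform G T u v).ArcInto {T.parent v}ᶜ) G.s y := by
    intro y hy
    have h := transform_reflTransGen_repl (T := T) (u := u) (v := v) (S' := {T.parent v}ᶜ)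
      (fun z hz => by rw [repl_of_ne hz.1]; exact hz.2)
      (reflTransGen_of_anc (S := {z | z ≠ v ∧ z ≠ T.parent v}) (anc_root y)
        fun z _ hzy => hy z hzy)
    rwa [repl_of_ne (huv.ne_root hbu hne).symm, repl_of_ne (hy y .refl).1] at h
  by_cases hc : Anc T u c ∧ c ≠ u
  · have hpu : ∀ z, Anc T z (T.parent u) → z ≠ v ∧ z ≠ T.parent v := by
      intro z hz
      have := hz.le hbu
      have := hbu u hus
      have := huv.le hbu
      have := hupv.le hbu
      constructor <;> intro hz <;> subst hz <;> order
    exact (tree _ hpu).tail ⟨transform_arc_parent (hpu _ .refl).1 hvc hc.1 hc.2 hcv hcpv, hcpv⟩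
  · refine tree c fun z hzc => ?_
    have hcu : Anc T u z → c = u := fun huz => by
      by_contra hcu
      exact hc ⟨huz.trans hzc, hcu⟩
    constructor
    · intro hzv
      subst hzv
      have hcu := hcu huv
      subst hcu
      exact hne (le_antisymm (hzc.le hbu) (huv.le hbu))
    · intro hzpv
      subst hzpv
      have hcu := hcu hupv
      subst hcu
      exact hcpv (le_antisymm (hzc.le hbu) (hupv.le hbu))

theorem transform_reach_of_reach_avoiding_parent [LinearOrder V]
    (hbu : ∀ x, x ≠ G.s → x < T.parent x) (hus : u ≠ G.s) (huv : Anc T u v) (hne : u ≠ v)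
    {b : V} (h : ReflTransGen (G.ArcInto {T.parent v}ᶜ) G.s b) :
    b = v ∨ ReflTransGen ((transform G T u v).ArcInto {T.parent v}ᶜ) G.s b := by
  induction h with
  | refl => exact .inr .refl
  | @tail a b _ hab ih =>
    by_cases hbv : b = v
    · exact .inl hbv
    by_cases hav : a = v
    · subst hav
      exact .inr (transform_reach_of_arc_from hbu hus huv hne hab.1 hbv hab.2)
    refine .inr ((ih.resolve_left hav).tail ⟨?_, hab.2⟩)
    simpa only [repl_of_ne hav, repl_of_ne hbv] using
      transform_arc_of_arc (T := T) (u := u) (v := v) hab.1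

theorem dom_of_transform_dom [LinearOrder V] (hbu : ∀ x, x ≠ G.s → x < T.parent x)
    (hus : u ≠ G.s) (huv : Anc T u v) (hne : u ≠ v) {x w : V} (hwv : w ≠ v)
    (h : (transform G T u v).Dom x w) : G.Dom x w := by
  rw [dom_iff_not_reach] at h ⊢
  rintro ⟨hsx, hsw⟩
  refine h ⟨hsx, ?_⟩
  by_cases hx : x = T.parent v
  · subst hx
    exact (transform_reach_of_reach_avoiding_parent hbu hus huv hne hsw).resolve_left hwv
  · have h := transform_reflTransGen_repl (T := T) (u := u) (v := v) (S' := {x}ᶜ)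
      (fun y hy => ?_) hsw
    · rwa [repl_of_ne (huv.ne_root hbu hne).symm, repl_of_ne hwv] at h
    by_cases hyv : y = v
    · rw [hyv, repl_self]
      exact Ne.symm hx
    · rwa [repl_of_ne hyv]

end Transform

theorem stmt11_general [LinearOrder V] (G : FlowGraph V) (T : SpanningTree G)
    (hbu : ∀ x, x ≠ G.s → x < T.parent x)
    (d : V → V) (hd : G.IsIdom d)
    (u v : V) (huv : u ≠ v) (hloop : InLoop G T u v)
    (hdesc : ∀ x, Anc T u x → x ≠ G.s → u < d x) :
    ∀ x w, x ≠ v → w ≠ v →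
      ((transform G T u v).Dom x w ↔ G.Dom x w) := by
  obtain ⟨hanc, lp, hlp, hlpm⟩ := hloop
  have hvs : v ≠ G.s := hanc.ne_root hbu huv
  have hus : u ≠ G.s := fun hus =>
    (hdesc v hanc hvs).not_ge (hus ▸ (anc_root (d v)).le hbu)
  have hD : ReflTransGen (G.ArcInto {z | Anc T u z}) v (T.parent v) :=
    (exists_isPath_subset_iff.1 ⟨lp, hlp, hlpm⟩).2.trans
      (reflTransGen_of_anc (hanc.parent huv.symm) fun _ huz _ => huz)
  intro x w _ hwv
  exact ⟨dom_of_transform_dom hbu hus hanc huv hwv,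
    transform_dom_of_dom hbu hd hdesc hus hanc hD⟩

/-- If `u ≠ v`, `v ∈ loop(u)`, and `d x > u` for all descendants `x` of `u` in `T`, then
`transform(u, v)` preserves the dominator relation on vertices other than `v`. -/
theorem stmt11 [LinearOrder V] (G : FlowGraph V) (T : SpanningTree G)
    (hreach : ∀ v, G.Reach G.s v)
    (hbu : ∀ x, x ≠ G.s → x < T.parent x)
    (d : V → V) (hd : G.IsIdom d)
    (u v : V) (huv : u ≠ v) (hloop : InLoop G T u v)
    (hdesc : ∀ x, Anc T u x → x ≠ G.s → u < d x) :
    ∀ x w, x ≠ v → w ≠ v →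
      ((transform G T u v).Dom x w ↔ G.Dom x w) :=
  stmt11_general G T hbu d hd u v huv hloop hdesc
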